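/- arXiv:1602.08626 — 7 statements merged into one kernel-verified Lean document; each statement's English description precedes it below -/
import Mathlib

section
/- For all real x ≥ 0 and real y with 0 ≤ y ≤ 1, the generalized binomial coefficient satisfies Γ(x+y+1)/(Γ(x+1)Γ(y+1)) ≥ (x+y)^y. -/
/-!
With `t = x + y`, Wendel's inequality `Γ(t + s) ≤ t ^ s Γ(t)` for `s = 1 - y`, a consequence of
the log-convexity of `Γ`, gives `t ^ y Γ(x + 1) ≤ t Γ(t) = Γ(t + 1)`. It remains to note that
`Γ(y + 1) ≤ 1`, since `Γ` is convex and equals `1` at both ends of `[1, 2]`.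
-/

open Real Set

namespace Real

lemma Gamma_le_one_of_mem_Icc {s : ℝ} (hs : s ∈ Icc (1 : ℝ) 2) : Gamma s ≤ 1 := by
  simpa [Gamma_two] using
    convexOn_Gamma.le_max_of_mem_Icc (mem_Ioi.2 one_pos) (mem_Ioi.2 two_pos) hs

/-- **Wendel's inequality**. -/
lemma Gamma_add_le_rpow_mul_Gamma {x s : ℝ} (hx : 0 < x) (hs0 : 0 ≤ s) (hs1 : s ≤ 1) :
    Gamma (x + s) ≤ x ^ s * Gamma x := by
  have hΓx : 0 < Gamma x := Gamma_pos_of_pos hx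
  have hlog : log (Gamma (x + s)) ≤ s * log x + log (Gamma x) := by
    have := convexOn_log_Gamma.2 (mem_Ioi.2 hx) (mem_Ioi.2 (by linarith : 0 < x + 1))
      (sub_nonneg.2 hs1) hs0 (by ring)
    simp only [Function.comp_apply, smul_eq_mul, Gamma_add_one hx.ne',
      log_mul hx.ne' hΓx.ne'] at this
    rw [show (1 - s) * x + s * (x + 1) = x + s by ring] at this
    linear_combination this
  calc Gamma (x + s) = exp (log (Gamma (x + s))) :=
        (exp_log (Gamma_pos_of_pos (by linarith))).symm
    _ ≤ exp (s * log x + log (Gamma x)) := exp_le_exp.2 hlog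
    _ = x ^ s * Gamma x := by rw [exp_add, exp_log hΓx, rpow_def_of_pos hx, mul_comm s]

end Real

theorem gamma_binom_lower_bound_small (x y : ℝ) (hx : 0 ≤ x) (hy0 : 0 ≤ y) (hy1 : y ≤ 1) :
    Real.Gamma (x + y + 1) / (Real.Gamma (x + 1) * Real.Gamma (y + 1)) ≥ (x + y) ^ y := by
  rcases (add_nonneg hx hy0).eq_or_lt with ht | ht
  · obtain ⟨rfl, rfl⟩ : x = 0 ∧ y = 0 := ⟨by linarith, by linarith⟩
    simp
  set t := x + y
  have hΓx : 0 < Gamma (x + 1) := Gamma_pos_of_pos (by linarith)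
  have hΓy : 0 < Gamma (y + 1) := Gamma_pos_of_pos (by linarith)
  have hwendel : t ^ y * Gamma (x + 1) ≤ Gamma (t + 1) := by
    have h := Gamma_add_le_rpow_mul_Gamma ht (sub_nonneg.2 hy1) (by linarith)
    rw [show t + (1 - y) = x + 1 by ring, rpow_sub ht, rpow_one] at h
    rw [Gamma_add_one ht.ne', ← le_div_iff₀' (rpow_pos_of_pos ht y)]
    calc Gamma (x + 1) ≤ t / t ^ y * Gamma t := h
      _ = t * Gamma t / t ^ y := by ring
  have hΓy_le : Gamma (y + 1) ≤ 1 := Gamma_le_one_of_mem_Icc ⟨by linarith, by linarith⟩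
  rw [ge_iff_le, le_div_iff₀ (mul_pos hΓx hΓy)]
  calc t ^ y * (Gamma (x + 1) * Gamma (y + 1)) ≤ t ^ y * Gamma (x + 1) := by
        rw [← mul_assoc]; exact mul_le_of_le_one_right (by positivity) hΓy_le
    _ ≤ Gamma (t + 1) := hwendel
end

section
/- For all real x ≥ 0 and real y ≥ 1, the generalized binomial coefficient satisfies Γ(x+y+1)/(Γ(x+1)Γ(y+1)) ≥ ((x+y)/y)^y. -/
/-!
Put `s = x + 1`. It suffices that `F(s) = log Γ(s + y) - log Γ(s) - y log(s + y - 1)` is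
nondecreasing on `s > 0`, since `F(1) = log Γ(y + 1) - y log y`. By the digamma series,
`F'(s) = ∑ₘ (1/(s + m) - 1/(s + y + m)) - y/(s + y - 1)`, and for `y ≥ 1` each summand
`y/((s + m)(s + y + m))` dominates the telescoping term `y/((s + y - 1 + m)(s + y + m))`.
The argument is run on Gauss' finite approximations of `log Γ`, which become monotone after
a correction that vanishes in the limit.
-/

open Filter Finset Real Topology
open Real.BohrMollerup (logGammaSeq)

lemma hasDerivAt_logGammaSeq {s : ℝ} (hs : 0 < s) (n : ℕ) :
    HasDerivAt (logGammaSeq · n) (log n - ∑ m ∈ range (n + 1), (s + m)⁻¹) s := by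
  have hlog : ∀ m ∈ range (n + 1), HasDerivAt (fun u => log (u + m)) (s + m)⁻¹ s :=
    fun m _ => by simpa using ((hasDerivAt_id s).add_const (m : ℝ)).log (by positivity)
  have hlin : HasDerivAt (fun u => u * log n + log n.factorial) (log n) s := by
    simpa using ((hasDerivAt_id s).mul_const (log n)).add_const (log n.factorial)
  exact hlin.fun_sub (HasDerivAt.fun_sum hlog)

lemma mul_inv_sub_inv_le_inv_sub_inv {a b : ℝ} (ha : 0 < a) (hab : a ≤ b - 1) :
    (b - a) * ((b - 1)⁻¹ - b⁻¹) ≤ a⁻¹ - b⁻¹ := by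
  have hb : 0 < b - 1 := by linarith
  have hb' : 0 < b := by linarith
  rw [inv_sub_inv hb.ne' hb'.ne', inv_sub_inv ha.ne' hb'.ne', sub_sub_cancel,
    mul_one_div]
  exact div_le_div_of_nonneg_left (by linarith) (by positivity) (by gcongr)

lemma mul_inv_sub_inv_le_sum_inv_sub_inv {s y : ℝ} (hs : 0 < s) (hy : 1 ≤ y) (N : ℕ) :
    y * ((s + y - 1)⁻¹ - (s + y - 1 + N)⁻¹) ≤ ∑ m ∈ range N, ((s + m)⁻¹ - (s + y + m)⁻¹) := by
  induction N with
  | zero => simp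
  | succ N ih =>
    have hterm := mul_inv_sub_inv_le_inv_sub_inv (a := s + N) (b := s + y + N) (by positivity)
      (by linarith)
    rw [show s + y + N - (s + N) = y by ring, show s + y + N - 1 = s + y - 1 + N by ring] at hterm
    rw [sum_range_succ, Nat.cast_succ, show s + y - 1 + (N + 1) = s + y + N by ring]
    linarith

/-- The last term makes each approximant monotone and tends to `0` as `n → ∞`. -/
noncomputable def logGammaRatioSeq (y : ℝ) (n : ℕ) (s : ℝ) : ℝ :=
  logGammaSeq (s + y) n - logGammaSeq s n - y * log (s + y - 1) + y * (log (n + (s + y)) - log n)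

lemma hasDerivAt_logGammaRatioSeq {y s : ℝ} (hy : 1 ≤ y) (hs : 0 < s) (n : ℕ) :
    HasDerivAt (logGammaRatioSeq y n)
      (∑ m ∈ range (n + 1), ((s + m)⁻¹ - (s + y + m)⁻¹)
        - y * ((s + y - 1)⁻¹ - (n + (s + y))⁻¹)) s := by
  have hshift := (hasDerivAt_logGammaSeq (by positivity : 0 < s + y) n).comp_add_const s y
  have hlog₁ := (((hasDerivAt_id' s).add_const y).sub_const 1).log (by linarith)
  have hlog₂ := (((hasDerivAt_id' s).add_const y).const_add (n : ℝ)).log (by positivity)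
  refine (((hshift.sub (hasDerivAt_logGammaSeq hs n)).sub (hlog₁.const_mul y)).add
    ((hlog₂.sub_const (log n)).const_mul y)).congr_deriv ?_
  simp only [one_div, sum_sub_distrib]
  ring

lemma monotoneOn_logGammaRatioSeq {y : ℝ} (hy : 1 ≤ y) (n : ℕ) :
    MonotoneOn (logGammaRatioSeq y n) (Set.Ioi 0) := by
  refine monotoneOn_of_hasDerivWithinAt_nonneg (convex_Ioi 0)
    (fun s hs => (hasDerivAt_logGammaRatioSeq hy hs n).continuousAt.continuousWithinAt)
    (fun s hs => (hasDerivAt_logGammaRatioSeq hy (interior_subset hs) n).hasDerivWithinAt)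
    fun s hs => ?_
  have hsum := mul_inv_sub_inv_le_sum_inv_sub_inv (interior_subset hs : 0 < s) hy (n + 1)
  rw [Nat.cast_succ, show s + y - 1 + (n + 1) = n + (s + y) by ring] at hsum
  exact sub_nonneg.2 hsum

lemma tendsto_logGammaRatioSeq {y s : ℝ} (hs : 0 < s) (hsy : 0 < s + y) :
    Tendsto (logGammaRatioSeq y · s) atTop
      (𝓝 (log (Gamma (s + y)) - log (Gamma s) - y * log (s + y - 1))) := by
  have hshift := (tendsto_log_comp_add_sub_log (s + y)).comp tendsto_natCast_atTop_atTop
  have := (((BohrMollerup.tendsto_log_gamma hsy).sub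
    (BohrMollerup.tendsto_log_gamma hs)).sub_const (y * log (s + y - 1))).add
    (hshift.const_mul y)
  rw [mul_zero, add_zero] at this
  exact this

lemma monotoneOn_log_Gamma_add_sub_log_Gamma {y : ℝ} (hy : 1 ≤ y) :
    MonotoneOn (fun s => log (Gamma (s + y)) - log (Gamma s) - y * log (s + y - 1)) (Set.Ioi 0) :=
  fun a ha b hb hab => le_of_tendsto_of_tendsto'
    (tendsto_logGammaRatioSeq ha (add_pos_of_pos_of_nonneg ha (by linarith)))
    (tendsto_logGammaRatioSeq hb (add_pos_of_pos_of_nonneg hb (by linarith)))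
    fun n => monotoneOn_logGammaRatioSeq hy n ha hb hab

theorem gamma_binom_lower_bound_large (x y : ℝ) (hx : 0 ≤ x) (hy : 1 ≤ y) :
    Real.Gamma (x + y + 1) / (Real.Gamma (x + 1) * Real.Gamma (y + 1)) ≥ ((x + y) / y) ^ y := by
  have hmono : log (Gamma (y + 1)) - y * log y
      ≤ log (Gamma (x + y + 1)) - log (Gamma (x + 1)) - y * log (x + y) := by
    have := monotoneOn_log_Gamma_add_sub_log_Gamma hy (Set.mem_Ioi.2 one_pos)
      (Set.mem_Ioi.2 (by linarith : (0 : ℝ) < x + 1)) (by linarith)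
    simpa only [Gamma_one, log_one, sub_zero, add_comm 1 y, add_sub_cancel_right,
      show x + 1 + y = x + y + 1 by ring] using this
  rw [ge_iff_le, rpow_def_of_pos (by positivity), ← exp_log (by positivity : 0 < Gamma (x + y + 1)
    / (Gamma (x + 1) * Gamma (y + 1))), exp_le_exp, log_div (by positivity) (by positivity),
    log_div (by positivity) (by positivity), log_mul (by positivity) (by positivity)]
  linarith
end

section
/- For all real y ≥ 1, the digamma function satisfies ψ(1+x+y) − ψ(1+x) ≥ y/(x+y) for every real x ≥ 0. -/
/-- The digamma function ψ(x) = Γ'(x)/Γ(x). -/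
noncomputable def digamma (x : ℝ) : ℝ := deriv Real.Gamma x / Real.Gamma x

/-!
The function `φ t = ψ t - log t` is nondecreasing on `(0, ∞)`. Indeed, `t ↦ t + 1` raises it by
`g (1 / t)` with `g u = u - log (1 + u)` nondecreasing, so for `a ≤ b` the difference
`φ b - φ a` can only decrease under `a, b ↦ a + n, b + n`; and log-convexity of `Γ` squeezes
`φ t` into `[-1 / t, 0]`, so that difference tends to `0` and was nonnegative.
Hence `ψ (x + y) - ψ (1 + x) ≥ log ((x + y) / (1 + x)) ≥ (y - 1) / (x + y)`, and
`ψ (1 + x + y) = ψ (x + y) + 1 / (x + y)` supplies the missing term.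
-/

open Real Set Filter Topology

lemma log_Gamma_add_one {s : ℝ} (hs : 0 < s) :
    log (Gamma (s + 1)) = log s + log (Gamma s) := by
  rw [Gamma_add_one hs.ne', log_mul hs.ne' (Gamma_pos_of_pos hs).ne']

lemma hasDerivAt_log_Gamma {t : ℝ} (ht : 0 < t) : HasDerivAt (log ∘ Gamma) (digamma t) t := by
  have hΓ : DifferentiableAt ℝ Gamma t := differentiableAt_Gamma fun m => by
    linarith [(Nat.cast_nonneg m : (0 : ℝ) ≤ m)]
  exact hΓ.hasDerivAt.log (Gamma_pos_of_pos ht).ne'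

lemma digamma_add_one {t : ℝ} (ht : 0 < t) : digamma (t + 1) = digamma t + t⁻¹ := by
  have hshift : HasDerivAt (fun s => (log ∘ Gamma) (s + 1)) (digamma (t + 1)) t :=
    (hasDerivAt_log_Gamma (by linarith)).comp_add_const t 1
  have hsum : HasDerivAt (fun s => log s + (log ∘ Gamma) s) (t⁻¹ + digamma t) t :=
    (hasDerivAt_log ht.ne').add (hasDerivAt_log_Gamma ht)
  have heq : (fun s => (log ∘ Gamma) (s + 1)) =ᶠ[𝓝 t] fun s => log s + (log ∘ Gamma) s := by
    filter_upwards [eventually_gt_nhds ht] with s hs using log_Gamma_add_one hs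
  rw [hshift.unique (hsum.congr_of_eventuallyEq heq), add_comm]

lemma slope_log_Gamma {s : ℝ} (hs : 0 < s) : slope (log ∘ Gamma) s (s + 1) = log s := by
  rw [slope_def_field, add_sub_cancel_left, div_one, Function.comp_apply, Function.comp_apply,
    log_Gamma_add_one hs, add_sub_cancel_right]

lemma digamma_le_log {s : ℝ} (hs : 0 < s) : digamma s ≤ log s := by
  rw [← slope_log_Gamma hs]
  exact convexOn_log_Gamma.le_slope_of_hasDerivAt (mem_Ioi.mpr hs)
    (mem_Ioi.mpr (by linarith)) (by linarith) (hasDerivAt_log_Gamma hs)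

lemma log_le_digamma_add_one {s : ℝ} (hs : 0 < s) : log s ≤ digamma (s + 1) := by
  rw [← slope_log_Gamma hs]
  exact convexOn_log_Gamma.slope_le_of_hasDerivAt (mem_Ioi.mpr hs)
    (mem_Ioi.mpr (by linarith)) (by linarith) (hasDerivAt_log_Gamma (by linarith))

lemma neg_inv_le_digamma_sub_log {s : ℝ} (hs : 0 < s) : -s⁻¹ ≤ digamma s - log s := by
  linarith [log_le_digamma_add_one hs, digamma_add_one hs]

lemma monotoneOn_sub_log_one_add : MonotoneOn (fun u : ℝ => u - log (1 + u)) (Ici 0) := by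
  intro v hv u _ hvu
  have hv1 : 0 < 1 + v := by linarith [mem_Ici.mp hv]
  have hlog : log ((1 + u) / (1 + v)) ≤ (1 + u) / (1 + v) - 1 :=
    log_le_sub_one_of_pos (div_pos (by linarith) hv1)
  have hquot : (1 + u) / (1 + v) - 1 ≤ u - v := by
    rw [div_sub_one hv1.ne', div_le_iff₀ hv1]
    nlinarith [mem_Ici.mp hv]
  rw [log_div (by linarith) hv1.ne'] at hlog
  dsimp only
  linarith

lemma digamma_sub_log_add_one {t : ℝ} (ht : 0 < t) :
    digamma (t + 1) - log (t + 1) = digamma t - log t + (t⁻¹ - log (1 + t⁻¹)) := by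
  have h : log (1 + t⁻¹) = log (t + 1) - log t := by
    rw [← log_div (by linarith) ht.ne', add_div, div_self ht.ne', one_div, add_comm]
  rw [digamma_add_one ht, h]
  ring

lemma digamma_sub_log_sub_le_add_nat {a b : ℝ} (ha : 0 < a) (hab : a ≤ b) (n : ℕ) :
    (digamma (b + n) - log (b + n)) - (digamma (a + n) - log (a + n)) ≤
      (digamma b - log b) - (digamma a - log a) := by
  induction n with
  | zero => simp
  | succ n ih =>
    have han : 0 < a + n := by positivity
    have hbn : 0 < b + n := by linarith
    have hinc := monotoneOn_sub_log_one_add (inv_nonneg.mpr hbn.le) (inv_nonneg.mpr han.le)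
      (inv_anti₀ han (by linarith))
    push_cast
    rw [← add_assoc, ← add_assoc, digamma_sub_log_add_one han, digamma_sub_log_add_one hbn]
    linarith

lemma log_sub_log_le_digamma_sub_digamma {a b : ℝ} (ha : 0 < a) (hab : a ≤ b) :
    log b - log a ≤ digamma b - digamma a := by
  have hb : 0 < b := ha.trans_le hab
  have hlower : ∀ n : ℕ, -(b + n)⁻¹ ≤ (digamma b - log b) - (digamma a - log a) := fun n => by
    have hbn := neg_inv_le_digamma_sub_log (show 0 < b + n by positivity)
    have han := digamma_le_log (show 0 < a + n by positivity)
    linarith [digamma_sub_log_sub_le_add_nat ha hab n]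
  have hlim : Tendsto (fun n : ℕ => -(b + n)⁻¹) atTop (𝓝 0) := by
    simpa using (tendsto_inv_atTop_zero.comp
      (tendsto_atTop_add_const_left _ b tendsto_natCast_atTop_atTop)).neg
  linarith [le_of_tendsto' hlim hlower]

theorem digamma_diff_ge (x y : ℝ) (hx : 0 ≤ x) (hy : 1 ≤ y) :
    digamma (1 + x + y) - digamma (1 + x) ≥ y / (x + y) := by
  have hxy : 0 < x + y := by linarith
  have hshift : digamma (1 + x + y) = digamma (x + y) + (x + y)⁻¹ := by
    rw [← digamma_add_one hxy]
    ring_nf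
  have hmono : log (x + y) - log (1 + x) ≤ digamma (x + y) - digamma (1 + x) :=
    log_sub_log_le_digamma_sub_digamma (by linarith) (by linarith)
  have hlog : 1 - (1 + x) / (x + y) ≤ log (x + y) - log (1 + x) := by
    rw [← log_div hxy.ne' (by linarith), ← inv_div]
    exact one_sub_inv_le_log_of_pos (by positivity)
  have hfrac : y / (x + y) = (x + y)⁻¹ + (1 - (1 + x) / (x + y)) := by
    field_simp
    ring
  rw [ge_iff_le, hshift, hfrac]
  linarith
end

section
/- For every integer m ≥ 2, the quantity |f_m(x₀)| = (2m/(m+1)) · (m(m−1)/((m+1)(m+1+α)))^{(m−1)/2} is strictly less than 2√2/3, where α ≥ 0 is real and x₀ = m(m−1)/((m+1)(m+1+α)). -/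
lemma bern2 (n : ℕ) (x : ℝ) (hx : 0 ≤ x) :
    1 + n * x + n * ((n : ℝ) - 1) / 2 * x ^ 2 ≤ (1 + x) ^ n := by
  induction n with
  | zero => norm_num
  | succ n ih =>
    have h1 : (0:ℝ) ≤ (n:ℝ) := Nat.cast_nonneg n
    have h2 : (0:ℝ) ≤ x ^ 2 := sq_nonneg x
    have h3 : (0:ℝ) ≤ x ^ 3 := by positivity
    calc 1 + (n+1 : ℕ) * x + (n+1 : ℕ) * (((n+1:ℕ) : ℝ) - 1) / 2 * x ^ 2
        ≤ (1 + n * x + n * ((n : ℝ) - 1) / 2 * x ^ 2) * (1 + x) := by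
          have h4 : (0:ℝ) ≤ (n:ℝ) * ((n:ℝ) - 1) := by
            rcases n with _ | k
            · norm_num
            · push_cast; nlinarith
          push_cast
          nlinarith [mul_nonneg h4 h3]
      _ ≤ (1 + x) ^ n * (1 + x) := by
          apply mul_le_mul_of_nonneg_right ih (by linarith)
      _ = (1 + x) ^ (n + 1) := (pow_succ _ _).symm

theorem critical_value_lt (α : ℝ) (hα : 0 ≤ α) (m : ℕ) (hm : 2 ≤ m) :
    (2 * (m : ℝ) / ((m : ℝ) + 1)) *
        ((m : ℝ) * ((m : ℝ) - 1) / (((m : ℝ) + 1) * ((m : ℝ) + 1 + α))) ^ (((m : ℝ) - 1) / 2)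
      < 2 * Real.sqrt 2 / 3 := by
  have hm2 : (2:ℝ) ≤ (m:ℝ) := by exact_mod_cast hm
  have hmpos : (0:ℝ) < (m:ℝ) := by linarith
  have hm1pos : (0:ℝ) < (m:ℝ) + 1 := by linarith
  set b : ℝ := (m:ℝ) / ((m:ℝ) + 1) with hb
  have hb0 : 0 ≤ b := by positivity
  set c : ℝ := (m : ℝ) * ((m : ℝ) - 1) / (((m : ℝ) + 1) * ((m : ℝ) + 1 + α)) with hc
  have hc0 : 0 ≤ c := by
    apply div_nonneg
    · nlinarith
    · nlinarith
  have hclt : c < b ^ 2 := by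
    rw [hc, hb, div_pow, div_lt_div_iff₀ (by nlinarith) (by positivity)]
    nlinarith [mul_pos (mul_pos hmpos hm1pos)
      (show (0:ℝ) < (m:ℝ) + (m:ℝ) * α + 1 by nlinarith)]
  have he : (0:ℝ) < ((m:ℝ) - 1) / 2 := by linarith
  have hrlt : c ^ (((m:ℝ) - 1) / 2) < (b ^ 2) ^ (((m:ℝ) - 1) / 2) :=
    Real.rpow_lt_rpow hc0 hclt he
  have hb2 : ((b ^ 2 : ℝ)) ^ (((m:ℝ) - 1) / 2) = b ^ (m - 1) := by
    rw [← Real.rpow_natCast b 2, ← Real.rpow_mul hb0]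
    rw [show ((2:ℕ):ℝ) * (((m:ℝ) - 1) / 2) = ((m - 1 : ℕ) : ℝ) by
      rw [Nat.cast_sub (by omega : 1 ≤ m)]; push_cast; ring]
    rw [Real.rpow_natCast]
  have step1 : (2 * (m:ℝ) / ((m:ℝ) + 1)) * c ^ (((m:ℝ) - 1) / 2)
      < (2 * (m:ℝ) / ((m:ℝ) + 1)) * b ^ (m - 1) := by
    apply mul_lt_mul_of_pos_left _ (by positivity)
    rw [← hb2]; exact hrlt
  have step2 : (2 * (m:ℝ) / ((m:ℝ) + 1)) * b ^ (m - 1) = 2 * b ^ m := by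
    have h1 : (2 * (m:ℝ) / ((m:ℝ) + 1)) * b ^ (m - 1) = 2 * (b ^ (m - 1) * b) := by
      rw [hb]; ring
    rw [h1, ← pow_succ, show m - 1 + 1 = m by omega]
  set t : ℝ := 1 / (m:ℝ) with ht
  have htm : (m:ℝ) * t = 1 := by rw [ht]; field_simp
  have ht2 : (m:ℝ) * t ^ 2 = t := by
    have : (m:ℝ) * t ^ 2 = ((m:ℝ) * t) * t := by ring
    rw [this, htm, one_mul]
  have ht12 : t ≤ 1 / 2 := by
    rw [ht]; rw [div_le_div_iff₀ hmpos (by norm_num)]; linarith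
  have ht0 : 0 ≤ t := by positivity
  have hbin := bern2 m t ht0
  have hX : (9/4 : ℝ) ≤ (1 + t) ^ m := by
    nlinarith [hbin, htm, ht2, ht12, ht0]
  have hprod : b * (1 + t) = 1 := by
    rw [hb, ht]; field_simp
  have hpow : b ^ m * (1 + t) ^ m = 1 := by rw [← mul_pow, hprod, one_pow]
  have hbp : 0 ≤ b ^ m := pow_nonneg hb0 m
  have hbm : b ^ m ≤ 4/9 := by nlinarith [hX, hpow, hbp]
  have hsq : (4:ℝ)/3 < Real.sqrt 2 := by
    rw [show (4:ℝ)/3 = Real.sqrt ((4/3) ^ 2) from (Real.sqrt_sq (by norm_num)).symm]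
    apply Real.sqrt_lt_sqrt <;> norm_num
  calc (2 * (m:ℝ) / ((m:ℝ) + 1)) * c ^ (((m:ℝ) - 1) / 2)
      < (2 * (m:ℝ) / ((m:ℝ) + 1)) * b ^ (m - 1) := step1
    _ = 2 * b ^ m := step2
    _ ≤ 8/9 := by linarith
    _ < 2 * Real.sqrt 2 / 3 := by linarith
end

section
/- For every real α ≥ 0, every integer m ≥ 0, and every x ∈ [0,1], the function f_m(x) = x^{(m−1)/2}((m+1+α)x − m) satisfies |f_m(x)| ≤ 1 + α. -/
/-!
Write `x = y²` with `y = √x ∈ [0,1]`, so that `f_m(x) = y^(m-1) ((m+1+α) y² - m)`. For `m = 0` this is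
`(1+α) y`. For `m ≥ 1` the upper bound is immediate from `y ≤ 1`, and the lower bound reduces to
`m y^(m-1) (1 - y²) ≤ 1`. Pairing the terms `y^(2i)` and `y^(2(m-1-i))` by AM-GM gives
`m y^(m-1) ≤ ∑_{i<m} y^(2i)`, and multiplying by `1 - y²` telescopes the geometric sum to `1 - y^(2m) ≤ 1`.
-/

open Finset

section OrderedRing

variable {R : Type*} [CommRing R] [LinearOrder R] [IsStrictOrderedRing R]

theorem succ_mul_pow_le_geom_sum_sq (y : R) (n : ℕ) :
    (n + 1 : R) * y ^ n ≤ ∑ i ∈ range (n + 1), (y ^ 2) ^ i := by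
  have hpair : ∀ i ∈ range (n + 1), 2 * y ^ n ≤ (y ^ 2) ^ i + (y ^ 2) ^ (n - i) := by
    intro i hi
    have hsplit : y ^ n = y ^ i * y ^ (n - i) := by
      rw [← pow_add, Nat.add_sub_cancel' (Nat.lt_succ_iff.mp (mem_range.mp hi))]
    rw [hsplit, ← pow_mul, ← pow_mul, mul_comm 2 i, mul_comm 2 (n - i), pow_mul, pow_mul,
      ← mul_assoc]
    exact two_mul_le_add_sq _ _
  have hreflect : ∑ i ∈ range (n + 1), (y ^ 2) ^ (n - i) = ∑ i ∈ range (n + 1), (y ^ 2) ^ i := by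
    simpa using sum_range_reflect (fun i ↦ (y ^ 2) ^ i) (n + 1)
  have hsum := sum_le_sum hpair
  rw [sum_add_distrib, hreflect, sum_const, card_range, nsmul_eq_mul] at hsum
  push_cast at hsum
  linarith

theorem succ_mul_pow_mul_one_sub_sq_le_one {y : R} (hy : y ^ 2 ≤ 1) (n : ℕ) :
    (n + 1 : R) * y ^ n * (1 - y ^ 2) ≤ 1 :=
  calc (n + 1 : R) * y ^ n * (1 - y ^ 2)
      ≤ (∑ i ∈ range (n + 1), (y ^ 2) ^ i) * (1 - y ^ 2) :=
        mul_le_mul_of_nonneg_right (succ_mul_pow_le_geom_sum_sq y n) (sub_nonneg.mpr hy)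
    _ = 1 - (y ^ 2) ^ (n + 1) := by rw [mul_comm, mul_neg_geom_sum]
    _ ≤ 1 := sub_le_self _ (pow_nonneg (sq_nonneg y) _)

theorem abs_pow_mul_sub_le {α y : R} (hα : 0 ≤ α) (hy0 : 0 ≤ y) (hy1 : y ≤ 1) (n : ℕ) :
    |y ^ n * ((n + 2 + α) * y ^ 2 - (n + 1))| ≤ 1 + α := by
  have hyn0 : 0 ≤ y ^ n := pow_nonneg hy0 n
  have hyn1 : y ^ n ≤ 1 := pow_le_one₀ hy0 hy1
  have hy2 : y ^ 2 ≤ 1 := pow_le_one₀ hy0 hy1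
  rw [abs_le]
  constructor
  · have hsplit : y ^ n * ((n + 2 + α) * y ^ 2 - (n + 1))
        = y ^ n * ((1 + α) * y ^ 2) - (n + 1) * y ^ n * (1 - y ^ 2) := by ring
    have hrest : 0 ≤ y ^ n * ((1 + α) * y ^ 2) := by positivity
    linarith [succ_mul_pow_mul_one_sub_sq_le_one hy2 n]
  · rcases le_total ((n + 2 + α) * y ^ 2 - (n + 1)) 0 with hneg | hpos
    · linarith [mul_nonpos_of_nonneg_of_nonpos hyn0 hneg]
    · calc y ^ n * ((n + 2 + α) * y ^ 2 - (n + 1)) ≤ (n + 2 + α) * y ^ 2 - (n + 1) :=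
            mul_le_of_le_one_left hpos hyn1
        _ ≤ 1 + α := by nlinarith

end OrderedRing

theorem abs_fm_le (α : ℝ) (hα : 0 ≤ α) (m : ℕ) (x : ℝ) (hx : x ∈ Set.Icc (0 : ℝ) 1) :
    |x ^ (((m : ℝ) - 1) / 2) * (((m : ℝ) + 1 + α) * x - (m : ℝ))| ≤ 1 + α := by
  obtain ⟨y, hy0, hy1, rfl⟩ : ∃ y, 0 ≤ y ∧ y ≤ 1 ∧ x = y ^ 2 :=
    ⟨√x, Real.sqrt_nonneg x, Real.sqrt_le_one.mpr hx.2, (Real.sq_sqrt hx.1).symm⟩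
  rw [Real.rpow_div_two_eq_sqrt _ (sq_nonneg y), Real.sqrt_sq hy0]
  cases m with
  | zero =>
    have hf : y ^ (((0 : ℕ) : ℝ) - 1) * ((((0 : ℕ) : ℝ) + 1 + α) * y ^ 2 - ((0 : ℕ) : ℝ))
        = (1 + α) * y := by
      rw [Nat.cast_zero, zero_sub, Real.rpow_neg_one, sq]
      calc y⁻¹ * ((0 + 1 + α) * (y * y) - 0) = (1 + α) * (y⁻¹ * y * y) := by ring
        _ = (1 + α) * y := by rw [inv_mul_mul_self]
    rw [hf, abs_of_nonneg (by positivity)]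
    exact mul_le_of_le_one_right (by linarith) hy1
  | succ n =>
    have hf : y ^ (((n + 1 : ℕ) : ℝ) - 1) * ((((n + 1 : ℕ) : ℝ) + 1 + α) * y ^ 2
        - ((n + 1 : ℕ) : ℝ)) = y ^ n * ((n + 2 + α) * y ^ 2 - (n + 1)) := by
      push_cast
      rw [add_sub_cancel_right, Real.rpow_natCast]
      ring
    rw [hf]
    exact abs_pow_mul_sub_le hα hy0 hy1 n
end

section
/- Let X be a compact topological space, X₀ a dense subset of X, and φ : X → ℝ a continuous function. Suppose for each pair x, y ∈ X₀ there exists a Borel probability measure μ_{x,y} on X with φ(x)φ(y) = ∫_X φ dμ_{x,y}. Then sup_{x∈X} |φ(x)| ≤ 1. -/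
open MeasureTheory

theorem bounded_by_one_of_product_formula
    {X : Type*} [TopologicalSpace X] [CompactSpace X]
    [MeasurableSpace X] [BorelSpace X] [Nonempty X]
    (X₀ : Set X) (hX₀ : Dense X₀)
    (φ : X → ℝ) (hφ : Continuous φ)
    (h : ∀ x ∈ X₀, ∀ y ∈ X₀, ∃ μ : Measure X, IsProbabilityMeasure μ ∧
      φ x * φ y = ∫ z, φ z ∂μ) :
    ∀ x : X, |φ x| ≤ 1 := by
  obtain ⟨x₀, -, hx₀⟩ := CompactSpace.isCompact_univ.exists_isMaxOn Set.univ_nonempty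
    (continuous_abs.comp hφ).continuousOn
  set M : ℝ := |φ x₀| with hM
  have hM0 : 0 ≤ M := abs_nonneg _
  have hbound : ∀ x, |φ x| ≤ M := fun x => hx₀ (Set.mem_univ x)
  -- for x in X₀, φ x ^ 2 ≤ M
  have key : ∀ x ∈ X₀, φ x ^ 2 ≤ M := by
    intro x hx
    obtain ⟨μ, hμ, hint⟩ := h x hx x hx
    have : ‖∫ z, φ z ∂μ‖ ≤ M * (μ Set.univ).toReal :=
      norm_integral_le_of_norm_le_const (Filter.Eventually.of_forall fun z => by
        simpa using hbound z)
    rw [hμ.measure_univ] at this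
    simp only [ENNReal.toReal_one, mul_one] at this
    calc φ x ^ 2 = φ x * φ x := sq (φ x) ▸ rfl
    _ ≤ |φ x * φ x| := le_abs_self _
    _ = ‖∫ z, φ z ∂μ‖ := by rw [hint]; rfl
    _ ≤ M := this
  -- extend to all x by density
  have key' : ∀ x, φ x ^ 2 ≤ M := by
    have hclosed : IsClosed {x | φ x ^ 2 ≤ M} :=
      isClosed_le (by continuity) continuous_const
    intro x
    have := hclosed.closure_subset_iff.mpr key (hX₀ x)
    exact this
  have hM1 : M ≤ 1 := by
    have h2 : M ^ 2 ≤ M := by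
      have := key' x₀
      calc M ^ 2 = φ x₀ ^ 2 := by rw [hM, sq_abs]
      _ ≤ M := this
    nlinarith
  exact fun x => (hbound x).trans hM1
end

section
/- For all integers n ≥ 0 and all real x ∈ [−1,1], the Legendre polynomial P_n satisfies (1−x²)^{1/4} |P_n(x)| ≤ 2/√(π(2n+1)). -/
/-!
Write `u(θ) = √(sin θ) · Pₙ(cos θ)`. Legendre's equation turns into `u'' + f u = 0` with
`f(θ) = n(n+1) + 1/4 + 1/(4 sin² θ)`, and then Sonin's function `E = u² + u'²/f` has derivative
`-f' u'²/f²`, which is `≥ 0` on `(0, π/2]` and `≤ 0` on `[π/2, π)`. Hence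
`√(1-x²) Pₙ(x)² = u² ≤ E ≤ E(π/2) = Pₙ(0)² + Pₙ'(0)²/(n(n+1) + 1/2)`.
Only one of `Pₙ(0)`, `Pₙ'(0)` is nonzero; it is a multiple of `binom(2m, m)/4^m`, whose square
times `4m+1` increases to `4/π` by Wallis' product.
-/

/-- The n-th Legendre polynomial via Rodrigues' formula. -/
noncomputable def legendreP (n : ℕ) (x : ℝ) : ℝ :=
  (1 / (2 ^ n * (n.factorial : ℝ))) * iteratedDeriv n (fun y : ℝ => (y ^ 2 - 1) ^ n) x

open Polynomial Real Filter Set Topology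
open scoped Nat

namespace Polynomial

variable {R : Type*} [CommRing R]

theorem iterate_derivative_X_mul (p : R[X]) (k : ℕ) :
    derivative^[k + 1] (X * p) =
      X * derivative^[k + 1] p + ((k : R[X]) + 1) * derivative^[k] p := by
  rw [mul_comm, iterate_derivative_mul_X, nsmul_eq_mul]
  push_cast
  ring

theorem iterate_derivative_X_sq_sub_one_mul_derivative (p : R[X]) (k : ℕ) :
    derivative^[k + 1] ((X ^ 2 - 1) * derivative p) =
      (X ^ 2 - 1) * derivative^[k + 2] p + 2 * ((k : R[X]) + 1) * X * derivative^[k + 1] p +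
        ((k : R[X]) + 1) * (k : R[X]) * derivative^[k] p := by
  induction k generalizing p with
  | zero =>
    simp [derivative_mul]
    ring
  | succ k ih =>
    have hD : derivative ((X ^ 2 - 1) * derivative p) =
        2 * (X * derivative p) + (X ^ 2 - 1) * derivative (derivative p) := by
      simp [derivative_mul]; ring
    rw [Function.iterate_succ_apply, hD, iterate_map_add, ← C_ofNat,
      iterate_derivative_C_mul, iterate_derivative_X_mul, ih]
    simp only [← Function.iterate_succ_apply, C_ofNat]
    push_cast
    ring

theorem coeff_X_sq_sub_one_pow (n k : ℕ) :
    ((X ^ 2 - 1 : R[X]) ^ n).coeff k =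
      if 2 ∣ k then (-1 : R) ^ (n - k / 2) * n.choose (k / 2) else 0 := by
  have : (X ^ 2 - 1 : R[X]) ^ n = expand R 2 ((X + C (-1)) ^ n) := by simp [sub_eq_add_neg]
  rw [this, coeff_expand two_pos, coeff_X_add_C_pow]

theorem iterate_derivative_eval_zero (p : R[X]) (j : ℕ) :
    (derivative^[j] p).eval 0 = j ! * p.coeff j := by
  rw [← coeff_zero_eq_eval_zero, coeff_iterate_derivative, zero_add, Nat.descFactorial_self,
    nsmul_eq_mul]

end Polynomial

noncomputable def normalizedCentralBinom (m : ℕ) : ℝ := m.centralBinom / 4 ^ m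

theorem normalizedCentralBinom_succ (m : ℕ) :
    (2 * m + 2) * normalizedCentralBinom (m + 1) = (2 * m + 1) * normalizedCentralBinom m := by
  have h : ((m + 1 : ℕ) : ℝ) * (m + 1).centralBinom = 2 * (2 * m + 1) * m.centralBinom := by
    exact_mod_cast Nat.succ_mul_centralBinom_succ m
  unfold normalizedCentralBinom
  push_cast at h
  rw [pow_succ]
  field_simp
  linear_combination 2 * h

theorem normalizedCentralBinom_sq_mul_W (m : ℕ) :
    normalizedCentralBinom m ^ 2 * (2 * m + 1) * Wallis.W m = 1 := by
  induction m with
  | zero => simp [normalizedCentralBinom, Wallis.W]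
  | succ m ih =>
    have h : normalizedCentralBinom (m + 1) =
        (2 * m + 1) * normalizedCentralBinom m / (2 * m + 2) := by
      rw [← normalizedCentralBinom_succ]; field_simp
    rw [h, Wallis.W_succ]
    push_cast
    field_simp
    linear_combination (2 * (m : ℝ) + 3) * ih

theorem monotone_normalizedCentralBinom_sq_mul :
    Monotone fun m : ℕ => normalizedCentralBinom m ^ 2 * (4 * m + 1) := by
  refine monotone_nat_of_le_succ fun m => ?_
  have h := normalizedCentralBinom_succ m
  have key : (2 * m + 2 : ℝ) ^ 2 * (normalizedCentralBinom (m + 1) ^ 2 * (4 * m + 5) -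
      normalizedCentralBinom m ^ 2 * (4 * m + 1)) = normalizedCentralBinom m ^ 2 := by
    linear_combination (4 * (m : ℝ) + 5) *
      ((2 * m + 2) * normalizedCentralBinom (m + 1) + (2 * m + 1) * normalizedCentralBinom m) * h
  have : 0 ≤ normalizedCentralBinom (m + 1) ^ 2 * (4 * m + 5) -
      normalizedCentralBinom m ^ 2 * (4 * m + 1) :=
    (mul_nonneg_iff_of_pos_left (by positivity)).mp (key ▸ sq_nonneg _)
  push_cast
  linarith

theorem tendsto_normalizedCentralBinom_sq_mul :
    Tendsto (fun m : ℕ => normalizedCentralBinom m ^ 2 * (4 * m + 1)) atTop (𝓝 (4 / π)) := by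
  have hlin : Tendsto (fun m : ℕ => (2 * m + 1 : ℝ)) atTop atTop :=
    (tendsto_natCast_atTop_atTop.const_mul_atTop two_pos).atTop_add tendsto_const_nhds
  have h : Tendsto (fun m : ℕ => (2 - 1 / (2 * m + 1)) / Wallis.W m) atTop
      (𝓝 ((2 - 0) / (π / 2))) :=
    (tendsto_const_nhds.sub (tendsto_const_nhds.div_atTop hlin)).div
      Wallis.tendsto_W_nhds_pi_div_two (by positivity)
  convert h using 2 with m
  · have hW := Wallis.W_pos m
    field_simp
    linear_combination (4 * (m : ℝ) + 1) * normalizedCentralBinom_sq_mul_W m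
  · field_simp; norm_num

theorem normalizedCentralBinom_sq_mul_le (m : ℕ) :
    normalizedCentralBinom m ^ 2 * (4 * m + 1) ≤ 4 / π :=
  monotone_normalizedCentralBinom_sq_mul.ge_of_tendsto tendsto_normalizedCentralBinom_sq_mul m

noncomputable def legendre (n : ℕ) : ℝ[X] :=
  C (1 / (2 ^ n * n ! : ℝ)) * derivative^[n] ((X ^ 2 - 1) ^ n)

theorem legendreP_eq_eval_legendre (n : ℕ) (x : ℝ) : legendreP n x = (legendre n).eval x := by
  have h (k : ℕ) : iteratedDeriv k (fun y : ℝ => (y ^ 2 - 1) ^ n) =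
      fun y => (derivative^[k] ((X ^ 2 - 1 : ℝ[X]) ^ n)).eval y := by
    induction k with
    | zero => ext; simp
    | succ k ih => ext; rw [iteratedDeriv_succ, ih, Function.iterate_succ_apply', Polynomial.deriv]
  simp [legendreP, legendre, h]

def IsLegendreSolution (c : ℝ) (Q : ℝ[X]) : Prop :=
  (1 - X ^ 2) * derivative (derivative Q) - 2 * X * derivative Q + C c * Q = 0

theorem isLegendreSolution_legendre (n : ℕ) : IsLegendreSolution (n * (n + 1)) (legendre n) := by
  set w : ℝ[X] := (X ^ 2 - 1) ^ n
  have hw : (X ^ 2 - 1) * derivative w = C (2 * n : ℝ) * (X * w) := by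
    rcases n with _ | n
    · simp [w]
    · simp [w, derivative_pow]; ring
  have h := congrArg (derivative^[n + 1]) hw
  rw [iterate_derivative_X_sq_sub_one_mul_derivative, iterate_derivative_C_mul,
    iterate_derivative_X_mul] at h
  simp only [IsLegendreSolution, legendre, derivative_C_mul,
    ← Function.iterate_succ_apply' derivative]
  simp only [map_mul, map_ofNat, map_natCast, map_add, map_one] at h ⊢
  linear_combination (-C (1 / (2 ^ n * n ! : ℝ))) * h

theorem iterate_derivative_legendre_eval_zero (n j : ℕ) :
    (derivative^[j] (legendre n)).eval 0 =
      (n + j) ! / (2 ^ n * n !) * ((X ^ 2 - 1 : ℝ[X]) ^ n).coeff (n + j) := by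
  rw [legendre, iterate_derivative_C_mul, eval_mul, eval_C, ← Function.iterate_add_apply,
    iterate_derivative_eval_zero, add_comm j n]
  ring

theorem legendre_two_mul_eval_zero (m : ℕ) :
    (legendre (2 * m)).eval 0 = (-1) ^ m * normalizedCentralBinom m := by
  have h := iterate_derivative_legendre_eval_zero (2 * m) 0
  rw [Function.iterate_zero_apply, add_zero, coeff_X_sq_sub_one_pow] at h
  rw [h, if_pos (dvd_mul_right 2 m), Nat.mul_div_cancel_left m two_pos,
    show 2 * m - m = m by omega, normalizedCentralBinom, Nat.centralBinom_eq_two_mul_choose,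
    pow_mul]
  field_simp
  ring

theorem legendre_two_mul_add_one_eval_zero (m : ℕ) : (legendre (2 * m + 1)).eval 0 = 0 := by
  have h := iterate_derivative_legendre_eval_zero (2 * m + 1) 0
  rw [Function.iterate_zero_apply, add_zero, coeff_X_sq_sub_one_pow] at h
  simpa [Nat.not_even_iff_odd, ← even_iff_two_dvd] using h

theorem derivative_legendre_two_mul_eval_zero (m : ℕ) :
    (derivative (legendre (2 * m))).eval 0 = 0 := by
  have h := iterate_derivative_legendre_eval_zero (2 * m) 1
  rw [Function.iterate_one, coeff_X_sq_sub_one_pow] at h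
  simpa [Nat.not_even_iff_odd, ← even_iff_two_dvd] using h

theorem derivative_legendre_two_mul_add_one_eval_zero (m : ℕ) :
    (derivative (legendre (2 * m + 1))).eval 0 =
      (-1) ^ m * ((2 * m + 1) * normalizedCentralBinom m) := by
  have h := iterate_derivative_legendre_eval_zero (2 * m + 1) 1
  rw [Function.iterate_one, coeff_X_sq_sub_one_pow, show 2 * m + 1 + 1 = 2 * (m + 1) by ring] at h
  have hc : ((2 * m + 1 : ℕ) : ℝ) * (2 * m).choose m =
      (2 * m + 1).choose (m + 1) * (m + 1) := by
    exact_mod_cast Nat.add_one_mul_choose_eq (2 * m) m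
  rw [h, if_pos (dvd_mul_right 2 _), Nat.mul_div_cancel_left _ two_pos,
    show 2 * m + 1 - (m + 1) = m by omega, normalizedCentralBinom,
    Nat.centralBinom_eq_two_mul_choose, show 2 * (m + 1) = 2 * m + 1 + 1 by ring,
    Nat.factorial_succ (2 * m + 1), pow_succ, pow_mul]
  push_cast at hc ⊢
  field_simp
  linear_combination (-2 * (2 ^ 2) ^ m : ℝ) * hc

theorem HasDerivAt.sonin_energy {u v f : ℝ → ℝ} {f' θ : ℝ} (hu : HasDerivAt u (v θ) θ)
    (hv : HasDerivAt v (-(f θ * u θ)) θ) (hf : HasDerivAt f f' θ) (hf0 : f θ ≠ 0) :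
    HasDerivAt (fun t => u t ^ 2 + v t ^ 2 / f t) (-(f' * v θ ^ 2) / f θ ^ 2) θ := by
  refine ((hu.pow 2).add ((hv.pow 2).div hf hf0)).congr_deriv ?_
  simp only [Pi.pow_apply]
  field_simp
  ring

theorem le_of_hasDerivAt_nonneg_nonpos {g g' : ℝ → ℝ} {a b c x : ℝ}
    (hg : ∀ t ∈ Ioo a b, HasDerivAt g (g' t) t) (hleft : ∀ t ∈ Ioo a c, 0 ≤ g' t)
    (hright : ∀ t ∈ Ioo c b, g' t ≤ 0) (hc : c ∈ Ioo a b) (hx : x ∈ Ioo a b) :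
    g x ≤ g c := by
  have hcont {y z : ℝ} (hy : y ∈ Ioo a b) (hz : z ∈ Ioo a b) : ContinuousOn g (Icc y z) :=
    fun t ht => (hg t ⟨hy.1.trans_le ht.1, ht.2.trans_lt hz.2⟩).continuousAt.continuousWithinAt
  have hderiv {y z : ℝ} (hy : y ∈ Ioo a b) (hz : z ∈ Ioo a b) :
      ∀ t ∈ interior (Icc y z), HasDerivWithinAt g (g' t) (interior (Icc y z)) t := by
    rw [interior_Icc]
    exact fun t ht => (hg t ⟨hy.1.trans ht.1, ht.2.trans hz.2⟩).hasDerivWithinAt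
  rcases le_total x c with hxc | hcx
  · refine monotoneOn_of_hasDerivWithinAt_nonneg (convex_Icc x c) (hcont hx hc) (hderiv hx hc)
      ?_ ⟨le_rfl, hxc⟩ ⟨hxc, le_rfl⟩ hxc
    rw [interior_Icc]
    exact fun t ht => hleft t ⟨hx.1.trans ht.1, ht.2⟩
  · refine antitoneOn_of_hasDerivWithinAt_nonpos (convex_Icc c x) (hcont hc hx) (hderiv hc hx)
      ?_ ⟨le_rfl, hcx⟩ ⟨hcx, le_rfl⟩ hcx
    rw [interior_Icc]
    exact fun t ht => hright t ⟨ht.1, ht.2.trans hx.2⟩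

noncomputable def liouville (Q : ℝ[X]) (θ : ℝ) : ℝ := √(sin θ) * Q.eval (cos θ)

noncomputable def liouvilleDeriv (Q : ℝ[X]) (θ : ℝ) : ℝ :=
  cos θ / (2 * √(sin θ)) * Q.eval (cos θ) - √(sin θ) * sin θ * (derivative Q).eval (cos θ)

noncomputable def liouvilleCoeff (c θ : ℝ) : ℝ := c + 1 / 4 + 1 / (4 * sin θ ^ 2)

noncomputable def soninEnergy (Q : ℝ[X]) (c θ : ℝ) : ℝ :=
  liouville Q θ ^ 2 + liouvilleDeriv Q θ ^ 2 / liouvilleCoeff c θ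

section Liouville

variable {Q : ℝ[X]} {c θ : ℝ}

theorem hasDerivAt_sqrt_sin (hθ : 0 < sin θ) :
    HasDerivAt (fun t => √(sin t)) (cos θ / (2 * √(sin θ))) θ := by
  simpa [Function.comp_def, div_eq_inv_mul, mul_comm] using
    (hasDerivAt_sqrt hθ.ne').comp θ (hasDerivAt_sin θ)

theorem hasDerivAt_eval_cos (p : ℝ[X]) (θ : ℝ) :
    HasDerivAt (fun t => p.eval (cos t)) (-sin θ * (derivative p).eval (cos θ)) θ := by
  simpa [Function.comp_def, mul_comm] using (p.hasDerivAt (cos θ)).comp θ (hasDerivAt_cos θ)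

theorem hasDerivAt_liouville (hθ : 0 < sin θ) :
    HasDerivAt (liouville Q) (liouvilleDeriv Q θ) θ := by
  refine ((hasDerivAt_sqrt_sin hθ).mul (hasDerivAt_eval_cos Q θ)).congr_deriv ?_
  have : √(sin θ) ≠ 0 := by positivity
  unfold liouvilleDeriv
  field_simp
  rw [sq_sqrt hθ.le]
  ring

theorem hasDerivAt_liouvilleCoeff (hθ : 0 < sin θ) :
    HasDerivAt (liouvilleCoeff c) (-cos θ / (2 * sin θ ^ 3)) θ := by
  have h := (((hasDerivAt_sin θ).pow 2).const_mul 4).inv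
    (mul_ne_zero four_ne_zero (pow_ne_zero 2 hθ.ne'))
  have hfun : liouvilleCoeff c = fun t => c + 1 / 4 + (4 * sin t ^ 2)⁻¹ := by
    ext t; simp only [liouvilleCoeff, one_div]
  rw [hfun]
  refine (h.const_add (c + 1 / 4)).congr_deriv ?_
  simp only [Pi.pow_apply]
  field_simp
  ring

theorem hasDerivAt_liouvilleDeriv
    (hQ : IsLegendreSolution c Q)
    (hθ : 0 < sin θ) :
    HasDerivAt (liouvilleDeriv Q) (-(liouvilleCoeff c θ * liouville Q θ)) θ := by
  have hr : √(sin θ) ≠ 0 := by positivity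
  have hA := ((hasDerivAt_cos θ).div ((hasDerivAt_sqrt_sin hθ).const_mul 2)
    (mul_ne_zero two_ne_zero hr)).mul (hasDerivAt_eval_cos Q θ)
  have hB := ((hasDerivAt_sqrt_sin hθ).mul (hasDerivAt_sin θ)).mul
    (hasDerivAt_eval_cos (derivative Q) θ)
  refine (hA.sub hB).congr_deriv ?_
  have hode := congrArg (eval (cos θ)) hQ
  simp only [eval_add, eval_sub, eval_mul, eval_one, eval_pow, eval_X, eval_C, eval_zero,
    eval_ofNat] at hode
  unfold liouvilleCoeff liouville
  simp only [Pi.mul_apply, Pi.div_apply]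
  set r := √(sin θ)
  have hs : sin θ = r ^ 2 := (sq_sqrt hθ.le).symm
  have hpy : r ^ 4 + cos θ ^ 2 = 1 := by rw [← sin_sq_add_cos_sq θ, hs]; ring
  rw [hs] at hA hB ⊢
  field_simp
  linear_combination (16 * r ^ 4) * hode +
    (16 * r ^ 4 * eval (cos θ) (derivative (derivative Q)) - 4 * eval (cos θ) Q) * hpy

theorem liouvilleCoeff_pos (hc : -1 / 4 ≤ c) (hθ : 0 < sin θ) : 0 < liouvilleCoeff c θ :=
  add_pos_of_nonneg_of_pos (by linarith) (by positivity)

theorem hasDerivAt_soninEnergy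
    (hQ : IsLegendreSolution c Q)
    (hc : -1 / 4 ≤ c) (hθ : 0 < sin θ) :
    HasDerivAt (soninEnergy Q c)
      (cos θ * liouvilleDeriv Q θ ^ 2 / (2 * sin θ ^ 3 * liouvilleCoeff c θ ^ 2)) θ := by
  refine ((hasDerivAt_liouville hθ).sonin_energy (hasDerivAt_liouvilleDeriv hQ hθ)
    (hasDerivAt_liouvilleCoeff hθ) (liouvilleCoeff_pos hc hθ).ne').congr_deriv ?_
  field_simp

theorem soninEnergy_le_soninEnergy_pi_div_two
    (hQ : IsLegendreSolution c Q)
    (hc : -1 / 4 ≤ c) (hθ : θ ∈ Ioo 0 π) :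
    soninEnergy Q c θ ≤ soninEnergy Q c (π / 2) := by
  have hsin {t : ℝ} (ht : t ∈ Ioo 0 π) : 0 < sin t := sin_pos_of_pos_of_lt_pi ht.1 ht.2
  refine le_of_hasDerivAt_nonneg_nonpos (fun t ht => hasDerivAt_soninEnergy hQ hc (hsin ht))
    (fun t ht => ?_) (fun t ht => ?_) ⟨by positivity, by linarith [pi_pos]⟩ hθ
  · have := hsin ⟨ht.1, ht.2.trans (by linarith [pi_pos])⟩
    have := cos_nonneg_of_neg_pi_div_two_le_of_le (by linarith [ht.1, pi_pos]) ht.2.le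
    positivity
  · have := hsin ⟨(by linarith [pi_pos] : (0 : ℝ) < π / 2).trans ht.1, ht.2⟩
    have := cos_nonpos_of_pi_div_two_le_of_le ht.1.le (by linarith [ht.2, pi_pos])
    exact div_nonpos_of_nonpos_of_nonneg (mul_nonpos_of_nonpos_of_nonneg this (sq_nonneg _))
      (by positivity)

theorem soninEnergy_pi_div_two :
    soninEnergy Q c (π / 2) = Q.eval 0 ^ 2 + (derivative Q).eval 0 ^ 2 / (c + 1 / 2) := by
  simp only [soninEnergy, liouville, liouvilleDeriv, liouvilleCoeff, sin_pi_div_two,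
    cos_pi_div_two]
  norm_num
  ring_nf

theorem sq_liouville_le_soninEnergy (hc : -1 / 4 ≤ c) (hθ : 0 < sin θ) :
    liouville Q θ ^ 2 ≤ soninEnergy Q c θ :=
  le_add_of_nonneg_right (div_nonneg (sq_nonneg _) (liouvilleCoeff_pos hc hθ).le)

theorem sqrt_one_sub_sq_mul_eval_sq_le
    (hQ : IsLegendreSolution c Q)
    (hc : -1 / 4 ≤ c) {x : ℝ} (hx : x ∈ Ioo (-1) 1) :
    √(1 - x ^ 2) * Q.eval x ^ 2 ≤ Q.eval 0 ^ 2 + (derivative Q).eval 0 ^ 2 / (c + 1 / 2) := by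
  have hθ : arccos x ∈ Ioo 0 π := ⟨arccos_pos.2 hx.2, arccos_lt_pi.2 hx.1⟩
  have hu : liouville Q (arccos x) ^ 2 = √(1 - x ^ 2) * Q.eval x ^ 2 := by
    rw [liouville, sin_arccos, cos_arccos hx.1.le hx.2.le, mul_pow, sq_sqrt (sqrt_nonneg _)]
  rw [← hu, ← soninEnergy_pi_div_two]
  exact (sq_liouville_le_soninEnergy hc (sin_pos_of_pos_of_lt_pi hθ.1 hθ.2)).trans
    (soninEnergy_le_soninEnergy_pi_div_two hQ hc hθ)

end Liouville

theorem legendre_eval_zero_sq_add_le (n : ℕ) :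
    (legendre n).eval 0 ^ 2 + (derivative (legendre n)).eval 0 ^ 2 / (n * (n + 1) + 1 / 2) ≤
      4 / (π * (2 * n + 1)) := by
  obtain ⟨m, rfl | rfl⟩ := n.even_or_odd'
  · have h := normalizedCentralBinom_sq_mul_le m
    rw [le_div_iff₀ pi_pos] at h
    rw [legendre_two_mul_eval_zero, derivative_legendre_two_mul_eval_zero, mul_pow, ← pow_mul,
      pow_mul', neg_one_sq, one_pow, one_mul, zero_pow two_ne_zero, zero_div, add_zero,
      le_div_iff₀ (by positivity)]
    push_cast
    linarith
  · have h := normalizedCentralBinom_sq_mul_le (m + 1)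
    have hsucc := normalizedCentralBinom_succ m
    rw [legendre_two_mul_add_one_eval_zero, derivative_legendre_two_mul_add_one_eval_zero,
      ← hsucc, mul_pow, ← pow_mul, pow_mul', neg_one_sq, one_pow, one_mul, zero_pow two_ne_zero,
      zero_add, div_le_div_iff₀ (by positivity) (by positivity)]
    have hp : π * normalizedCentralBinom (m + 1) ^ 2 ≤ 4 / (4 * m + 5) := by
      rw [le_div_iff₀ pi_pos] at h
      rw [le_div_iff₀ (by positivity)]
      push_cast at h
      linarith
    push_cast
    calc ((2 * (m : ℝ) + 2) * normalizedCentralBinom (m + 1)) ^ 2 * (π * (2 * (2 * m + 1) + 1))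
        = π * normalizedCentralBinom (m + 1) ^ 2 * ((2 * (m : ℝ) + 2) ^ 2 * (4 * m + 3)) := by
          ring
      _ ≤ 4 / (4 * (m : ℝ) + 5) * ((2 * m + 2) ^ 2 * (4 * m + 3)) := by gcongr
      _ ≤ 4 * ((2 * (m : ℝ) + 1) * (2 * m + 1 + 1) + 1 / 2) := by
        rw [div_mul_eq_mul_div, div_le_iff₀ (by positivity)]
        nlinarith

theorem bernstein_legendre (n : ℕ) (x : ℝ) (hx : x ∈ Set.Icc (-1 : ℝ) 1) :
    (1 - x ^ 2) ^ ((1 : ℝ) / 4) * |legendreP n x| ≤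
      2 / Real.sqrt (Real.pi * (2 * n + 1)) := by
  rcases (show 0 ≤ 1 - x ^ 2 by nlinarith [hx.1, hx.2]).eq_or_lt with h | h
  · rw [← h, zero_rpow (by norm_num), zero_mul]
    positivity
  have hx' : x ∈ Ioo (-1) 1 := abs_lt.mp ((sq_lt_one_iff_abs_lt_one x).mp (by linarith))
  have key := (sqrt_one_sub_sq_mul_eval_sq_le (isLegendreSolution_legendre n)
    (by linarith [show (0 : ℝ) ≤ n * (n + 1) by positivity]) hx').trans
    (legendre_eval_zero_sq_add_le n)
  rw [← legendreP_eq_eval_legendre] at key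
  refine (pow_le_pow_iff_left₀ (by positivity) (by positivity) two_ne_zero).mp ?_
  rw [div_pow, sq_sqrt (by positivity), mul_pow, sq_abs, ← rpow_natCast, ← rpow_mul h.le,
    show (1 : ℝ) / 4 * (2 : ℕ) = 1 / 2 by norm_num, ← sqrt_eq_rpow]
  linarith
end
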